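/- arXiv:1509.04362 — 7 statements merged into one kernel-verified Lean document; each statement's English description precedes it below -/
import Mathlib

section
/- Let S be a bounded selfadjoint operator on a complex Hilbert space K with spectrum contained in [γ, Γ], and let g : [γ, Γ] → ℂ be continuous such that |g(t) − λ| ≤ ρ for all t ∈ [γ, Γ], for some λ ∈ ℂ and ρ > 0. Then for every unit vector x ∈ K, |⟨S g(S) x, x⟩ − ⟨S x, x⟩⟨g(S) x, x⟩| ≤ ρ ⟨|S − ⟨S x, x⟩·1| x, x⟩ ≤ ρ (⟨S² x, x⟩ − ⟨S x, x⟩²)^{1/2}. -/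
/-!
Write `m = ⟪S x, x⟫`. For a unit vector `x` the covariance `⟪S g(S) x, x⟫ - m ⟪g(S) x, x⟫`
equals `⟪h(S) x, x⟫` with `h(t) = (t - m) (g(t) - λ)`, and `|h(t)| ≤ ρ |t - m|` on the spectrum.
For a normal operator `T`, `|f| ≤ ψ` on the spectrum gives `|⟪f(T) x, x⟫| ≤ ⟪ψ(T) x, x⟫`: after
rotating `f` by a unimodular constant this is the positivity of `ψ(T) - (Re f)(T)`. Taking
`ψ(t) = ρ |t - m|`, so that `ψ(S) = ρ |S - m|`, gives the first bound; the second is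
Cauchy–Schwarz together with `‖|A| x‖ = ‖A x‖` and `‖(S - m) x‖² = ⟪S² x, x⟫ - m²`.
-/

open scoped InnerProductSpace

/-- The modulus `|T| = (T*T)^{1/2}` of a bounded operator. -/
noncomputable def opAbs {K : Type*} [NormedAddCommGroup K] [InnerProductSpace ℂ K]
    [CompleteSpace K] (T : K →L[ℂ] K) : K →L[ℂ] K :=
  CFC.sqrt (star T * T)

open scoped ComplexOrder ComplexStarModule

lemma realPart_cfc {A : Type*} [CStarAlgebra A] (f : ℂ → ℂ) (a : A)
    (hf : ContinuousOn f (spectrum ℂ a) := by cfc_cont_tac) (ha : IsStarNormal a := by cfc_tac) :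
    (ℜ (cfc f a) : A) = cfc (fun z => ((f z).re : ℂ)) a := by
  rw [← cfc_re_id (cfc f a), ← cfc_comp' (fun z : ℂ => (z.re : ℂ)) f a]

lemma cfc_sub_mul_sub {A : Type*} [CStarAlgebra A] (a : A) [IsStarNormal a] (g : ℂ → ℂ)
    (hg : ContinuousOn g (spectrum ℂ a)) (c d : ℂ) :
    cfc (fun z => (z - c) * (g z - d)) a = (a - c • 1) * (cfc g a - d • 1) := by
  rw [cfc_mul (· - c) (g · - d) a, cfc_sub .., cfc_sub .., cfc_id' .., cfc_const c a,
    cfc_const d a, Algebra.algebraMap_eq_smul_one, Algebra.algebraMap_eq_smul_one]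

section Operator

variable {K : Type*} [NormedAddCommGroup K] [InnerProductSpace ℂ K] [CompleteSpace K]

lemma inner_realPart_apply (A : K →L[ℂ] K) (x : K) :
    ⟪(ℜ A : K →L[ℂ] K) x, x⟫_ℂ = (⟪A x, x⟫_ℂ).re := by
  rw [realPart_apply_coe, smul_apply, add_apply, ContinuousLinearMap.star_eq_adjoint,
    RCLike.real_smul_eq_coe_smul (K := ℂ), inner_smul_left, RCLike.conj_ofReal, inner_add_left,
    ContinuousLinearMap.adjoint_inner_left, Complex.re_eq_add_conj, inner_conj_symm]
  push_cast
  ring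

lemma opAbs_sub_smul_one (T : K →L[ℂ] K) [IsStarNormal T] (c : ℂ) :
    opAbs (T - c • 1) = cfc (fun z => (‖z - c‖ : ℂ)) T := by
  have hsub : T - c • 1 = cfc (· - c) T := by
    rw [cfc_sub .., cfc_id' .., cfc_const .., Algebra.algebraMap_eq_smul_one]
  change CFC.abs _ = _
  rw [hsub, CFC.abs_eq_cfcₙ_coe_norm ℂ (cfc (· - c) T), cfcₙ_eq_cfc]
  exact (cfc_comp' (fun z : ℂ => (‖z‖ : ℂ)) (· - c) T).symm

lemma norm_opAbs_apply (A : K →L[ℂ] K) (x : K) : ‖opAbs A x‖ = ‖A x‖ := by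
  have hP : IsSelfAdjoint (opAbs A) := (CFC.abs_nonneg A).isSelfAdjoint
  rw [← sq_eq_sq₀ (norm_nonneg _) (norm_nonneg _),
    ContinuousLinearMap.apply_norm_sq_eq_inner_adjoint_left,
    ContinuousLinearMap.apply_norm_sq_eq_inner_adjoint_left,
    ← ContinuousLinearMap.star_eq_adjoint, ← ContinuousLinearMap.star_eq_adjoint, hP.star_eq]
  exact congr(RCLike.re ⟪$(CFC.abs_mul_abs A) x, x⟫_ℂ)

lemma re_inner_opAbs_apply_le (A : K →L[ℂ] K) (x : K) :
    (⟪opAbs A x, x⟫_ℂ).re ≤ ‖A x‖ * ‖x‖ :=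
  norm_opAbs_apply A x ▸ re_inner_le_norm (𝕜 := ℂ) _ _

lemma re_inner_cfc_le (T : K →L[ℂ] K) [IsStarNormal T] {f : ℂ → ℂ} {ψ : ℂ → ℝ}
    (hf : ContinuousOn f (spectrum ℂ T)) (hψ : ContinuousOn ψ (spectrum ℂ T))
    (hfψ : ∀ z ∈ spectrum ℂ T, (f z).re ≤ ψ z) (x : K) :
    (⟪cfc f T x, x⟫_ℂ).re ≤ (⟪cfc (fun z => (ψ z : ℂ)) T x, x⟫_ℂ).re := by
  have hle : cfc (fun z => ((f z).re : ℂ)) T ≤ cfc (fun z => (ψ z : ℂ)) T :=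
    cfc_mono (fun z hz => Complex.real_le_real.mpr (hfψ z hz))
      (Complex.continuous_ofReal.comp_continuousOn (Complex.continuous_re.comp_continuousOn hf))
      (Complex.continuous_ofReal.comp_continuousOn hψ)
  have hpos := (Complex.nonneg_iff.mp
    (((ContinuousLinearMap.le_def _ _).mp hle).inner_nonneg_left x)).1
  rw [sub_apply, inner_sub_left, Complex.sub_re, sub_nonneg] at hpos
  rwa [← Complex.ofReal_re (⟪cfc f T x, x⟫_ℂ).re, ← inner_realPart_apply, realPart_cfc f T]

lemma norm_inner_cfc_le (T : K →L[ℂ] K) [IsStarNormal T] {f : ℂ → ℂ} {ψ : ℂ → ℝ}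
    (hf : ContinuousOn f (spectrum ℂ T)) (hψ : ContinuousOn ψ (spectrum ℂ T))
    (hfψ : ∀ z ∈ spectrum ℂ T, ‖f z‖ ≤ ψ z) (x : K) :
    ‖⟪cfc f T x, x⟫_ℂ‖ ≤ (⟪cfc (fun z => (ψ z : ℂ)) T x, x⟫_ℂ).re := by
  obtain ⟨c, hc1, hc⟩ := Complex.exists_norm_eq_mul_self ⟪cfc f T x, x⟫_ℂ
  have hrot : ⟪cfc (fun z => star c * f z) T x, x⟫_ℂ = c * ⟪cfc f T x, x⟫_ℂ := by
    rw [cfc_const_mul .., smul_apply, inner_smul_left, Complex.star_def, Complex.conj_conj]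
  calc ‖⟪cfc f T x, x⟫_ℂ‖ = (⟪cfc (fun z => star c * f z) T x, x⟫_ℂ).re := by
        rw [hrot, ← hc, Complex.ofReal_re]
    _ ≤ _ := re_inner_cfc_le T (f := fun z => star c * f z) (continuousOn_const.mul hf) hψ
        (fun z hz => (Complex.re_le_norm _).trans <| by
          rw [norm_mul, norm_star, hc1, one_mul]; exact hfψ z hz) x

lemma norm_inner_cfc_sub_mul_le (T : K →L[ℂ] K) [IsStarNormal T] (c : ℂ) {f : ℂ → ℂ} {ρ : ℝ}
    (hf : ContinuousOn f (spectrum ℂ T)) (hfρ : ∀ z ∈ spectrum ℂ T, ‖f z‖ ≤ ρ) (x : K) :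
    ‖⟪cfc (fun z => (z - c) * f z) T x, x⟫_ℂ‖ ≤ ρ * (⟪opAbs (T - c • 1) x, x⟫_ℂ).re := by
  calc _ ≤ (⟪cfc (fun z => ((ρ * ‖z - c‖ : ℝ) : ℂ)) T x, x⟫_ℂ).re :=
        norm_inner_cfc_le T (f := fun z => (z - c) * f z)
          ((continuousOn_id.sub continuousOn_const).mul hf) (by fun_prop) (fun z hz => by
            rw [norm_mul, mul_comm ρ]
            exact mul_le_mul_of_nonneg_left (hfρ z hz) (norm_nonneg _)) x
    _ = _ := by
        simp only [Complex.ofReal_mul]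
        rw [cfc_const_mul .., opAbs_sub_smul_one T, smul_apply, inner_smul_left,
          Complex.conj_ofReal, Complex.re_ofReal_mul]

lemma IsSelfAdjoint.conj_inner_apply_self {S : K →L[ℂ] K} (hS : IsSelfAdjoint S) (x : K) :
    (starRingEnd ℂ) ⟪S x, x⟫_ℂ = ⟪S x, x⟫_ℂ :=
  hS.isSymmetric.conj_inner_sym x x

lemma inner_comp_apply_sub_inner_mul_inner {S : K →L[ℂ] K} (hS : IsSelfAdjoint S)
    (H : K →L[ℂ] K) (c : ℂ) {x : K} (hx : ‖x‖ = 1) :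
    ⟪(S ∘L H) x, x⟫_ℂ - ⟪S x, x⟫_ℂ * ⟪H x, x⟫_ℂ =
      ⟪((S - ⟪S x, x⟫_ℂ • 1) * (H - c • 1)) x, x⟫_ℂ := by
  have hxx : ⟪x, x⟫_ℂ = 1 := by simp [inner_self_eq_norm_sq_to_K, hx]
  simp only [sub_mul, mul_sub, smul_mul_assoc, mul_smul_comm, one_mul, mul_one, sub_apply,
    smul_apply, mul_apply_eq_comp, one_apply_eq_self, ContinuousLinearMap.comp_apply,
    inner_sub_left, inner_smul_left, hxx, hS.conj_inner_apply_self]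
  ring

lemma norm_sub_inner_smul_apply_sq {S : K →L[ℂ] K} (hS : IsSelfAdjoint S) {x : K}
    (hx : ‖x‖ = 1) :
    ‖(S - ⟪S x, x⟫_ℂ • 1) x‖ ^ 2 = (⟪(S ∘L S) x, x⟫_ℂ).re - (⟪S x, x⟫_ℂ).re ^ 2 := by
  have hA : star (S - ⟪S x, x⟫_ℂ • 1) = S - ⟪S x, x⟫_ℂ • 1 := by
    rw [star_sub, star_smul, hS.star_eq, star_one, Complex.star_def, hS.conj_inner_apply_self]
  have him : (⟪S x, x⟫_ℂ).im = 0 := Complex.conj_eq_iff_im.mp (hS.conj_inner_apply_self x)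
  rw [ContinuousLinearMap.apply_norm_sq_eq_inner_adjoint_left,
    ← ContinuousLinearMap.star_eq_adjoint, hA, ← ContinuousLinearMap.mul_def,
    ← inner_comp_apply_sub_inner_mul_inner hS S _ hx, RCLike.re_to_complex, Complex.sub_re,
    Complex.mul_re, him]
  ring

end Operator

theorem quantum_lemma_bound
    {K : Type*} [NormedAddCommGroup K] [InnerProductSpace ℂ K] [CompleteSpace K]
    (S : K →L[ℂ] K) (hS : IsSelfAdjoint S) (γ Γ : ℝ)
    (hspec : spectrum ℝ S ⊆ Set.Icc γ Γ)
    (g : ℂ → ℂ) (hg : ContinuousOn g ((fun t : ℝ => (t : ℂ)) '' Set.Icc γ Γ))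
    (lam : ℂ) (ρ : ℝ) (hρ : 0 < ρ)
    (hbound : ∀ t ∈ Set.Icc γ Γ, ‖g (t : ℂ) - lam‖ ≤ ρ)
    (x : K) (hx : ‖x‖ = 1) :
    ‖⟪(S ∘L cfc g S) x, x⟫_ℂ - ⟪S x, x⟫_ℂ * ⟪(cfc g S) x, x⟫_ℂ‖ ≤
        ρ * (⟪(opAbs (S - ⟪S x, x⟫_ℂ • (1 : K →L[ℂ] K))) x, x⟫_ℂ).re ∧
      ρ * (⟪(opAbs (S - ⟪S x, x⟫_ℂ • (1 : K →L[ℂ] K))) x, x⟫_ℂ).re ≤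
        ρ * Real.sqrt ((⟪(S ∘L S) x, x⟫_ℂ).re - ((⟪S x, x⟫_ℂ).re) ^ 2) := by
  have : IsStarNormal S := hS.isStarNormal
  have hspecC : spectrum ℂ S ⊆ (fun t : ℝ => (t : ℂ)) '' Set.Icc γ Γ := fun z hz =>
    ⟨z.re, hspec (hS.spectrumRestricts.apply_mem hz), (hS.mem_spectrum_eq_re hz).symm⟩
  have hgS : ContinuousOn g (spectrum ℂ S) := hg.mono hspecC
  refine ⟨?_, ?_⟩
  · rw [inner_comp_apply_sub_inner_mul_inner hS _ lam hx, ← cfc_sub_mul_sub S g hgS]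
    refine norm_inner_cfc_sub_mul_le S _ (f := (g · - lam)) (hgS.sub continuousOn_const)
      (fun z hz => ?_) x
    obtain ⟨t, ht, rfl⟩ := hspecC hz
    exact hbound t ht
  · gcongr
    calc _ ≤ ‖(S - ⟪S x, x⟫_ℂ • 1) x‖ := by
          simpa only [hx, mul_one] using re_inner_opAbs_apply_le _ x
      _ = _ := by rw [← norm_sub_inner_smul_apply_sq hS hx, Real.sqrt_sq (norm_nonneg _)]
end

section
/- Let S be a bounded selfadjoint operator on a complex Hilbert space K with Sp(S) ⊆ [γ, Γ]. Then for every unit vector x, ⟨S² x, x⟩ − ⟨S x, x⟩² ≤ (1/4)(Γ − γ)². -/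
/-!
By the continuous functional calculus, `(Γ - S)(S - γ) ≥ 0` since `(Γ - t)(t - γ) ≥ 0` on the
spectrum, i.e. `S² ≤ (Γ + γ) S - Γγ`. Testing this against a unit vector `x` and writing
`m = ⟨S x, x⟩` gives `⟨S² x, x⟩ - m² ≤ (Γ - m)(m - γ)`, and the right-hand side is at most
`(Γ - γ)² / 4` by AM-GM.
-/

open scoped InnerProductSpace

theorem IsSelfAdjoint.sq_le_of_spectrum_subset_Icc {A : Type*} [Ring A] [StarRing A]
    [Algebra ℝ A] [TopologicalSpace A] [PartialOrder A] [StarOrderedRing A]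
    [ContinuousFunctionalCalculus ℝ A IsSelfAdjoint] {a : A} (ha : IsSelfAdjoint a) {γ Γ : ℝ}
    (h : spectrum ℝ a ⊆ Set.Icc γ Γ) :
    a ^ 2 ≤ (Γ + γ) • a - algebraMap ℝ A (Γ * γ) := by
  have hcfc := cfc_mono (a := a) (f := (· ^ 2)) (g := fun t => (Γ + γ) * t - Γ * γ) fun t ht => by
    obtain ⟨hγ, hΓ⟩ := h ht
    nlinarith [mul_nonneg (sub_nonneg.mpr hΓ) (sub_nonneg.mpr hγ)]
  rwa [cfc_pow_id .., cfc_sub .., cfc_const_mul_id .., cfc_const ..] at hcfc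

theorem ContinuousLinearMap.re_inner_apply_le_of_le {𝕜 E : Type*} [RCLike 𝕜]
    [NormedAddCommGroup E] [InnerProductSpace 𝕜 E] {T T' : E →L[𝕜] E} (h : T ≤ T') (x : E) :
    RCLike.re ⟪T x, x⟫_𝕜 ≤ RCLike.re ⟪T' x, x⟫_𝕜 := by
  simpa [inner_sub_left] using ((le_def T T').mp h).re_inner_nonneg_left x

theorem IsSelfAdjoint.re_inner_sq_apply_le_of_spectrum_subset_Icc {E : Type*}
    [NormedAddCommGroup E] [InnerProductSpace ℂ E] [CompleteSpace E] {S : E →L[ℂ] E}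
    (hS : IsSelfAdjoint S) {γ Γ : ℝ} (h : spectrum ℝ S ⊆ Set.Icc γ Γ) (x : E) :
    (⟪(S ^ 2) x, x⟫_ℂ).re ≤ (Γ + γ) * (⟪S x, x⟫_ℂ).re - Γ * γ * ‖x‖ ^ 2 := by
  simpa [inner_sub_left, Algebra.algebraMap_eq_smul_one, ← Complex.coe_smul, inner_smul_left,
    ← Complex.ofReal_pow, mul_assoc] using
    ContinuousLinearMap.re_inner_apply_le_of_le (hS.sq_le_of_spectrum_subset_Icc h) x

theorem variance_quarter_bound
    {K : Type*} [NormedAddCommGroup K] [InnerProductSpace ℂ K] [CompleteSpace K]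
    (S : K →L[ℂ] K) (hS : IsSelfAdjoint S) (γ Γ : ℝ)
    (hspec : spectrum ℝ S ⊆ Set.Icc γ Γ)
    (x : K) (hx : ‖x‖ = 1) :
    (⟪(S ∘L S) x, x⟫_ℂ).re - ((⟪S x, x⟫_ℂ).re) ^ 2 ≤ (1 / 4) * (Γ - γ) ^ 2 := by
  have hquad := hS.re_inner_sq_apply_le_of_spectrum_subset_Icc hspec x
  rw [hx, one_pow, mul_one, pow_two] at hquad
  set m := (⟪S x, x⟫_ℂ).re
  calc (⟪(S * S) x, x⟫_ℂ).re - m ^ 2 ≤ (Γ + γ) * m - Γ * γ - m ^ 2 := by linarith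
    _ = (1 / 4) * (Γ - γ) ^ 2 - (m - (Γ + γ) / 2) ^ 2 := by ring
    _ ≤ (1 / 4) * (Γ - γ) ^ 2 := sub_le_self _ (sq_nonneg _)
end

section
/- Let f : C → ℝ be convex on a convex subset C of a real vector space. Then for all x, y ∈ C and s ∈ [0,1]: 2·min{s, 1−s}·[ (f(x)+f(y))/2 − f((x+y)/2) ] ≤ s f(x) + (1−s) f(y) − f(s x + (1−s) y) ≤ 2·max{s, 1−s}·[ (f(x)+f(y))/2 − f((x+y)/2) ]. -/
private lemma aux_half
    {X : Type*} [AddCommGroup X] [Module ℝ X]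
    {C : Set X} (f : X → ℝ) (hf : ConvexOn ℝ C f)
    (x y : X) (hx : x ∈ C) (hy : y ∈ C) (s : ℝ) (hs0 : 0 ≤ s) (hs2 : s ≤ 1/2) :
    2 * s * ((f x + f y) / 2 - f ((1 / 2 : ℝ) • (x + y))) ≤
      s * f x + (1 - s) * f y - f (s • x + (1 - s) • y) ∧
    s * f x + (1 - s) * f y - f (s • x + (1 - s) • y) ≤
      2 * (1 - s) * ((f x + f y) / 2 - f ((1 / 2 : ℝ) • (x + y))) := by
  have hmC : (1 / 2 : ℝ) • (x + y) ∈ C := by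
    have := hf.1 hx hy (by norm_num : (0:ℝ) ≤ 1/2) (by norm_num : (0:ℝ) ≤ 1/2)
      (by norm_num)
    simpa [smul_add] using this
  have hzC : s • x + (1 - s) • y ∈ C := hf.1 hx hy hs0 (by linarith) (by ring)
  -- lower bound: f(z) ≤ 2s f(m) + (1-2s) f(y)
  have h1 : f ((2*s) • ((1 / 2 : ℝ) • (x + y)) + (1-2*s) • y) ≤
      (2*s) * f ((1 / 2 : ℝ) • (x + y)) + (1-2*s) * f y :=
    hf.2 hmC hy (by linarith) (by linarith) (by ring)
  have he1 : (2*s) • ((1 / 2 : ℝ) • (x + y)) + (1-2*s) • y = s • x + (1 - s) • y := by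
    rw [smul_smul, smul_add]
    match_scalars <;> ring
  rw [he1] at h1
  -- upper bound: f(m) ≤ λ f(z) + (1-λ) f(x), λ = 1/(2(1-s))
  set t := 1 - s with ht
  have htpos : (0:ℝ) < t := by simp [ht]; linarith
  set u := 1/(2*t) with hu
  have hune : (2*t) ≠ 0 := by positivity
  have huu : 2*t*u = 1 := by rw [hu]; field_simp
  have h2 : f (u • (s • x + t • y) + (1 - u) • x) ≤
      u * f (s • x + t • y) + (1 - u) * f x :=
    hf.2 hzC hx (by positivity) (by rw [sub_nonneg, hu, div_le_one (by linarith)]; linarith)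
    (by ring)
  have he2 : u • (s • x + t • y) + (1 - u) • x = (1 / 2 : ℝ) • (x + y) := by
    rw [smul_add, smul_smul, smul_smul, smul_add]
    match_scalars <;> rw [hu] <;> field_simp <;> ring
  rw [he2] at h2
  constructor
  · linarith
  · have hmul := mul_le_mul_of_nonneg_left h2 (show (0:ℝ) ≤ 2*t by linarith)
    have hkey : 2*t*(u * f (s • x + t • y) + (1 - u) * f x) =
        f (s • x + t • y) + (2*t - 1) * f x := by
      linear_combination (f (s • x + t • y) - f x) * huu
    rw [hkey] at hmul
    nlinarith

theorem two_point_jensen_refinement_reverse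
    {X : Type*} [AddCommGroup X] [Module ℝ X]
    {C : Set X} (f : X → ℝ) (hf : ConvexOn ℝ C f)
    (x y : X) (hx : x ∈ C) (hy : y ∈ C) (s : ℝ) (hs : s ∈ Set.Icc (0 : ℝ) 1) :
    2 * min s (1 - s) * ((f x + f y) / 2 - f ((1 / 2 : ℝ) • (x + y))) ≤
      s * f x + (1 - s) * f y - f (s • x + (1 - s) • y) ∧
    s * f x + (1 - s) * f y - f (s • x + (1 - s) • y) ≤
      2 * max s (1 - s) * ((f x + f y) / 2 - f ((1 / 2 : ℝ) • (x + y))) := by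
  obtain ⟨hs0, hs1⟩ := hs
  rcases le_total s (1/2) with h | h
  · obtain ⟨hl, hu⟩ := aux_half f hf x y hx hy s hs0 h
    rw [min_eq_left (by linarith), max_eq_right (by linarith)]
    exact ⟨hl, hu⟩
  · obtain ⟨hl, hu⟩ := aux_half f hf y x hy hx (1 - s) (by linarith) (by linarith)
    rw [min_eq_right (by linarith), max_eq_left (by linarith)]
    have e1 : (1:ℝ) - (1 - s) = s := by ring
    rw [e1, add_comm y x, add_comm ((1-s) • y) (s • x)] at hl hu
    constructor <;> linarith
end

section
/- Let f : [r, R] → ℝ be convex with r < R. Then for every t ∈ [r, R], ((R−t) f(r) + (t−r) f(R))/(R−r) − f(t) ≤ [1 + (2/(R−r))·|t − (r+R)/2|]·[ (f(r)+f(R))/2 − f((r+R)/2) ] ≤ 2·[ (f(r)+f(R))/2 − f((r+R)/2) ]. -/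
/-!
The defect `g t = ℓ t - f t` of `f` below its chord `ℓ` is concave, vanishes at `r` and `R`, and
equals `D = (f r + f R) / 2 - f m` at the midpoint `m`. For `t ≤ m`, concavity of `g` on `[t, R]`
at the point `m` gives `g t ≤ (R - t) / (R - m) * D = (1 + 2 (m - t) / (R - r)) * D`, and
symmetrically for `t ≥ m`. The second inequality is `|t - m| ≤ (R - r) / 2` together with `D ≥ 0`.
-/

namespace ConvexOn

variable {𝕜 : Type*} [Field 𝕜] [LinearOrder 𝕜] [IsStrictOrderedRing 𝕜] {s : Set 𝕜} {f : 𝕜 → 𝕜}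
  {x y z : 𝕜}

theorem sub_mul_le_of_le_of_le (hf : ConvexOn 𝕜 s f) (hx : x ∈ s) (hz : z ∈ s)
    (hxy : x ≤ y) (hyz : y ≤ z) : (z - x) * f y ≤ (z - y) * f x + (y - x) * f z := by
  rcases hxy.eq_or_lt with rfl | hxy
  · simp
  rcases hyz.eq_or_lt with rfl | hyz
  · simp
  exact hf.secant_mono_aux1 hx hz hxy hyz

theorem map_midpoint_le_average (hf : ConvexOn 𝕜 (Set.Icc x z) f) (hxz : x ≤ z) :
    f ((x + z) / 2) ≤ (f x + f z) / 2 := by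
  rcases hxz.eq_or_lt with rfl | hxz
  · simp [← two_mul]
  have key := hf.sub_mul_le_of_le_of_le (Set.left_mem_Icc.2 hxz.le) (Set.right_mem_Icc.2 hxz.le)
    (y := (x + z) / 2) (by linarith) (by linarith)
  refine le_of_mul_le_mul_left ?_ (sub_pos.2 hxz)
  linear_combination key

theorem chord_sub_le_mul_midpoint_defect (hf : ConvexOn 𝕜 (Set.Icc x z) f) {t : 𝕜} (ht : t ∈ Set.Icc x z) :
    (z - t) * f x + (t - x) * f z - (z - x) * f t ≤
      (z - x + 2 * |t - (x + z) / 2|) * ((f x + f z) / 2 - f ((x + z) / 2)) := by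
  have hxz : x ≤ z := ht.1.trans ht.2
  have hxs := Set.left_mem_Icc.2 hxz
  have hzs := Set.right_mem_Icc.2 hxz
  rcases le_total t ((x + z) / 2) with htm | htm
  · rw [abs_of_nonpos (sub_nonpos.2 htm)]
    linear_combination 2 * hf.sub_mul_le_of_le_of_le ht hzs htm (by linarith)
  · rw [abs_of_nonneg (sub_nonneg.2 htm)]
    linear_combination 2 * hf.sub_mul_le_of_le_of_le hxs ht (by linarith) htm

end ConvexOn

theorem secant_defect_bound
    (r R : ℝ) (hrR : r < R) (f : ℝ → ℝ)
    (hf : ConvexOn ℝ (Set.Icc r R) f) (t : ℝ) (ht : t ∈ Set.Icc r R) :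
    ((R - t) * f r + (t - r) * f R) / (R - r) - f t ≤
      (1 + (2 / (R - r)) * |t - (r + R) / 2|) *
        ((f r + f R) / 2 - f ((r + R) / 2)) ∧
    (1 + (2 / (R - r)) * |t - (r + R) / 2|) *
        ((f r + f R) / 2 - f ((r + R) / 2)) ≤
      2 * ((f r + f R) / 2 - f ((r + R) / 2)) := by
  have hRr : 0 < R - r := sub_pos.2 hrR
  have hD : 0 ≤ (f r + f R) / 2 - f ((r + R) / 2) := sub_nonneg.2 (hf.map_midpoint_le_average hrR.le)
  have hdist : |t - (r + R) / 2| ≤ (R - r) / 2 :=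
    abs_le.2 ⟨by linarith [ht.1], by linarith [ht.2]⟩
  constructor
  · calc ((R - t) * f r + (t - r) * f R) / (R - r) - f t
        = ((R - t) * f r + (t - r) * f R - (R - r) * f t) / (R - r) := by field_simp
      _ ≤ (R - r + 2 * |t - (r + R) / 2|) * ((f r + f R) / 2 - f ((r + R) / 2)) / (R - r) := by
        gcongr; exact hf.chord_sub_le_mul_midpoint_defect ht
      _ = _ := by field_simp
  · gcongr
    calc 1 + 2 / (R - r) * |t - (r + R) / 2| ≤ 1 + 2 / (R - r) * ((R - r) / 2) := by gcongr
      _ = 2 := by field_simp; ring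
end

section
/- Let S be a bounded selfadjoint operator on a complex Hilbert space K with Sp(S) ⊆ [r, R], r < R, and let f : [r, R] → ℝ be continuous and convex. Then for every unit vector x ∈ K, ⟨f(S) x, x⟩ ≤ ( (⟨S x, x⟩ − r) f(R) + (R − ⟨S x, x⟩) f(r) ) / (R − r). -/
open scoped InnerProductSpace

/-!
On `[r, R]` the convex function `f` lies below its secant line `ℓ`, so `f(S) ≤ ℓ(S)` by
monotonicity of the continuous functional calculus. Since `ℓ` is affine, `ℓ(S)` is an affine
combination of `S` and `1`, and for a unit vector `x` its quadratic form is `ℓ(⟪S x, x⟫)`.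
-/

theorem ConvexOn.mul_le_secant {𝕜 : Type*} [Field 𝕜] [LinearOrder 𝕜] [IsStrictOrderedRing 𝕜]
    {s : Set 𝕜} {f : 𝕜 → 𝕜} {a b t : 𝕜} (hf : ConvexOn 𝕜 s f) (ha : a ∈ s) (hb : b ∈ s)
    (hat : a ≤ t) (htb : t ≤ b) :
    (b - a) * f t ≤ (b - t) * f a + (t - a) * f b := by
  rcases hat.eq_or_lt with rfl | hat
  · linarith
  rcases htb.eq_or_lt with rfl | htb
  · linarith
  exact hf.secant_mono_aux1 ha hb hat htb

namespace ContinuousLinearMap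

theorem re_inner_le_re_inner_of_le {𝕜 E : Type*} [RCLike 𝕜] [NormedAddCommGroup E]
    [InnerProductSpace 𝕜 E] {A B : E →L[𝕜] E} (h : A ≤ B) (x : E) :
    RCLike.re ⟪A x, x⟫_𝕜 ≤ RCLike.re ⟪B x, x⟫_𝕜 := by
  have := ((le_def A B).mp h).re_inner_nonneg_left x
  rwa [sub_apply, inner_sub_left, map_sub, sub_nonneg] at this

theorem re_inner_cfc_affine {K : Type*} [NormedAddCommGroup K] [InnerProductSpace ℂ K]
    [CompleteSpace K] {S : K →L[ℂ] K} (hS : IsSelfAdjoint S) (c d : ℝ) (x : K) :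
    (⟪cfc (fun t : ℝ => c * t + d) S x, x⟫_ℂ).re = c * (⟪S x, x⟫_ℂ).re + d * ‖x‖ ^ 2 := by
  rw [cfc_add_const d _ S, cfc_const_mul_id c S, Algebra.algebraMap_eq_smul_one]
  simp [inner_self_eq_norm_sq_to_K, ← Complex.ofReal_pow]

end ContinuousLinearMap

theorem cfc_secant_bound
    {K : Type*} [NormedAddCommGroup K] [InnerProductSpace ℂ K] [CompleteSpace K]
    (S : K →L[ℂ] K) (hS : IsSelfAdjoint S) (r R : ℝ) (hrR : r < R)
    (hspec : spectrum ℝ S ⊆ Set.Icc r R)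
    (f : ℝ → ℝ) (hfc : ContinuousOn f (Set.Icc r R))
    (hf : ConvexOn ℝ (Set.Icc r R) f)
    (x : K) (hx : ‖x‖ = 1) :
    (⟪(cfc f S) x, x⟫_ℂ).re ≤
      (((⟪S x, x⟫_ℂ).re - r) * f R + (R - (⟪S x, x⟫_ℂ).re) * f r) / (R - r) := by
  have hRr : 0 < R - r := sub_pos.2 hrR
  set c := (f R - f r) / (R - r)
  set d := (R * f r - r * f R) / (R - r)
  have hsecant : ∀ t ∈ spectrum ℝ S, f t ≤ c * t + d := fun t ht => by
    obtain ⟨hrt, htR⟩ := hspec ht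
    have hchord := hf.mul_le_secant (Set.left_mem_Icc.2 hrR.le) (Set.right_mem_Icc.2 hrR.le) hrt htR
    simp only [c, d]
    rw [← mul_le_mul_iff_of_pos_left hRr]
    field_simp
    linarith [hchord]
  calc (⟪cfc f S x, x⟫_ℂ).re ≤ (⟪cfc (fun t => c * t + d) S x, x⟫_ℂ).re :=
        ContinuousLinearMap.re_inner_le_re_inner_of_le (cfc_mono hsecant (hfc.mono hspec)) x
    _ = c * (⟪S x, x⟫_ℂ).re + d := by
      rw [ContinuousLinearMap.re_inner_cfc_affine hS, hx, one_pow, mul_one]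
    _ = _ := by simp only [c, d]; field_simp; ring
end

section
/- Let S be a bounded selfadjoint operator on a complex Hilbert space K with Sp(S) ⊆ [r, R], r < R, and f : [r, R] → ℝ continuous convex. Then for every unit vector x ∈ K, 0 ≤ ⟨f(S) x, x⟩ − f(⟨S x, x⟩) ≤ ((R − ⟨S x, x⟩)(⟨S x, x⟩ − r)/(R − r))·Ψ_f(⟨S x, x⟩; r, R) whenever ⟨S x, x⟩ ∈ (r, R), where Ψ_f(t; r, R) = (f(R) − f(t))/(R − t) − (f(t) − f(r))/(t − r). -/
open scoped InnerProductSpace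

/-!
A unit vector `x` turns `g ↦ re ⟪g(S) x, x⟫` into a monotone functional on functions continuous
on `Sp(S)` which evaluates affine functions at `m = re ⟪S x, x⟫`. Squeezing the convex `f`
between a supporting line at `m` (the right derivative is a subgradient) and the chord through
`(r, f r)` and `(R, f R)` gives `f m ≤ re ⟪f(S) x, x⟫ ≤ chord(m)`, and `chord(m) - f m` is the
stated multiple of `Ψ_f(m; r, R)`.
-/

namespace ConvexOn

theorem add_rightDeriv_mul_sub_le {s : Set ℝ} {f : ℝ → ℝ} {m t : ℝ} (hf : ConvexOn ℝ s f)
    (hm : m ∈ interior s) (ht : t ∈ s) :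
    f m + derivWithin f (Set.Ioi m) m * (t - m) ≤ f t := by
  rcases lt_trichotomy t m with htm | rfl | hmt
  · have h : slope f t m ≤ derivWithin f (Set.Ioi m) m :=
      (hf.slope_le_leftDeriv_of_mem_interior ht hm htm).trans
        (hf.leftDeriv_le_rightDeriv_of_mem_interior hm)
    rw [slope_def_field, div_le_iff₀ (sub_pos.2 htm)] at h
    linarith
  · simp
  · have h := hf.rightDeriv_le_slope_of_mem_interior hm ht hmt
    rw [slope_def_field, le_div_iff₀ (sub_pos.2 hmt)] at h
    linarith

theorem le_add_slope_mul_sub {𝕜 : Type*} [Field 𝕜] [LinearOrder 𝕜] [IsStrictOrderedRing 𝕜]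
    {s : Set 𝕜} {f : 𝕜 → 𝕜} {r R t : 𝕜} (hf : ConvexOn 𝕜 s f) (hr : r ∈ s) (hR : R ∈ s)
    (hrt : r ≤ t) (htR : t ≤ R) :
    f t ≤ f r + slope f r R * (t - r) := by
  rcases hrt.eq_or_lt with rfl | hrt
  · simp
  have ht : t ∈ s := hf.1.ordConnected.out hr hR ⟨hrt.le, htR⟩
  have hslope : slope f r t ≤ slope f r R :=
    hf.slope_mono hr ⟨ht, hrt.ne'⟩ ⟨hR, (hrt.trans_le htR).ne'⟩ htR
  calc f t = f r + slope f r t * (t - r) := by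
        rw [slope_def_field]; field_simp [(sub_pos.2 hrt).ne']; ring
    _ ≤ f r + slope f r R * (t - r) := by gcongr

end ConvexOn

theorem ContinuousLinearMap.re_inner_le_re_inner_of_le_s13 {𝕜 E : Type*} [RCLike 𝕜]
    [NormedAddCommGroup E] [InnerProductSpace 𝕜 E] {A B : E →L[𝕜] E} (h : A ≤ B) (x : E) :
    RCLike.re ⟪A x, x⟫_𝕜 ≤ RCLike.re ⟪B x, x⟫_𝕜 := by
  have := ((ContinuousLinearMap.le_def A B).mp h).re_inner_nonneg_left x
  rwa [sub_apply, inner_sub_left, map_sub, sub_nonneg] at this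

section

variable {K : Type*} [NormedAddCommGroup K] [InnerProductSpace ℂ K] [CompleteSpace K]
  {S : K →L[ℂ] K} {x : K} {f g : ℝ → ℝ}

theorem re_inner_cfc_le_re_inner_cfc (hfg : ∀ t ∈ spectrum ℝ S, f t ≤ g t)
    (hf : ContinuousOn f (spectrum ℝ S)) (hg : ContinuousOn g (spectrum ℝ S)) :
    (⟪cfc f S x, x⟫_ℂ).re ≤ (⟪cfc g S x, x⟫_ℂ).re :=
  ContinuousLinearMap.re_inner_le_re_inner_of_le_s13 (cfc_mono hfg hf hg) x

theorem re_inner_cfc_affine (hS : IsSelfAdjoint S) (hx : ‖x‖ = 1) (a b : ℝ) :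
    (⟪cfc (fun t : ℝ => a + b * t) S x, x⟫_ℂ).re = a + b * (⟪S x, x⟫_ℂ).re := by
  rw [cfc_const_add a _ S, cfc_const_mul_id b S]
  simp [Algebra.algebraMap_eq_smul_one, ← Complex.coe_smul,
    inner_self_eq_norm_sq_to_K, hx, mul_comm]

theorem add_mul_re_inner_le_re_inner_cfc (hS : IsSelfAdjoint S) (hx : ‖x‖ = 1)
    (hf : ContinuousOn f (spectrum ℝ S)) {a b : ℝ} (h : ∀ t ∈ spectrum ℝ S, a + b * t ≤ f t) :
    a + b * (⟪S x, x⟫_ℂ).re ≤ (⟪cfc f S x, x⟫_ℂ).re :=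
  re_inner_cfc_affine hS hx a b ▸ re_inner_cfc_le_re_inner_cfc h (by fun_prop) hf

theorem re_inner_cfc_le_add_mul_re_inner (hS : IsSelfAdjoint S) (hx : ‖x‖ = 1)
    (hf : ContinuousOn f (spectrum ℝ S)) {a b : ℝ} (h : ∀ t ∈ spectrum ℝ S, f t ≤ a + b * t) :
    (⟪cfc f S x, x⟫_ℂ).re ≤ a + b * (⟪S x, x⟫_ℂ).re :=
  re_inner_cfc_affine hS hx a b ▸ re_inner_cfc_le_re_inner_cfc h hf (by fun_prop)

end

theorem cfc_jensen_defect_slope_bound_general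
    {K : Type*} [NormedAddCommGroup K] [InnerProductSpace ℂ K] [CompleteSpace K]
    (S : K →L[ℂ] K) (hS : IsSelfAdjoint S) (r R : ℝ)
    (hspec : spectrum ℝ S ⊆ Set.Icc r R)
    (f : ℝ → ℝ) (hfc : ContinuousOn f (Set.Icc r R))
    (hf : ConvexOn ℝ (Set.Icc r R) f)
    (x : K) (hx : ‖x‖ = 1) (hm : (⟪S x, x⟫_ℂ).re ∈ Set.Ioo r R) :
    0 ≤ (⟪(cfc f S) x, x⟫_ℂ).re - f ((⟪S x, x⟫_ℂ).re) ∧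
    (⟪(cfc f S) x, x⟫_ℂ).re - f ((⟪S x, x⟫_ℂ).re) ≤
      ((R - (⟪S x, x⟫_ℂ).re) * ((⟪S x, x⟫_ℂ).re - r) / (R - r)) *
        ((f R - f ((⟪S x, x⟫_ℂ).re)) / (R - (⟪S x, x⟫_ℂ).re) -
          (f ((⟪S x, x⟫_ℂ).re) - f r) / ((⟪S x, x⟫_ℂ).re - r)) := by
  set m := (⟪S x, x⟫_ℂ).re
  obtain ⟨hrm, hmR⟩ := hm
  have hrR : r ≤ R := (hrm.trans hmR).le
  have hf' : ContinuousOn f (spectrum ℝ S) := hfc.mono hspec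
  set c := derivWithin f (Set.Ioi m) m
  have lower : f m - c * m + c * m ≤ (⟪cfc f S x, x⟫_ℂ).re :=
    add_mul_re_inner_le_re_inner_cfc hS hx hf' fun t ht => by
      have := hf.add_rightDeriv_mul_sub_le (by rw [interior_Icc]; exact ⟨hrm, hmR⟩) (hspec ht)
      linarith
  have upper : (⟪cfc f S x, x⟫_ℂ).re ≤ f r - slope f r R * r + slope f r R * m :=
    re_inner_cfc_le_add_mul_re_inner hS hx hf' fun t ht => by
      have := hf.le_add_slope_mul_sub (Set.left_mem_Icc.2 hrR) (Set.right_mem_Icc.2 hrR)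
        (hspec ht).1 (hspec ht).2
      linarith
  have hchord_sub : f r + slope f r R * (m - r) - f m =
      (R - m) * (m - r) / (R - r) * ((f R - f m) / (R - m) - (f m - f r) / (m - r)) := by
    rw [slope_def_field]
    field_simp [(sub_pos.2 hmR).ne', (sub_pos.2 hrm).ne', (sub_pos.2 (hrm.trans hmR)).ne']
    ring
  exact ⟨by linarith, by linarith⟩

theorem cfc_jensen_defect_slope_bound
    {K : Type*} [NormedAddCommGroup K] [InnerProductSpace ℂ K] [CompleteSpace K]
    (S : K →L[ℂ] K) (hS : IsSelfAdjoint S) (r R : ℝ) (hrR : r < R)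
    (hspec : spectrum ℝ S ⊆ Set.Icc r R)
    (f : ℝ → ℝ) (hfc : ContinuousOn f (Set.Icc r R))
    (hf : ConvexOn ℝ (Set.Icc r R) f)
    (x : K) (hx : ‖x‖ = 1) (hm : (⟪S x, x⟫_ℂ).re ∈ Set.Ioo r R) :
    0 ≤ (⟪(cfc f S) x, x⟫_ℂ).re - f ((⟪S x, x⟫_ℂ).re) ∧
    (⟪(cfc f S) x, x⟫_ℂ).re - f ((⟪S x, x⟫_ℂ).re) ≤
      ((R - (⟪S x, x⟫_ℂ).re) * ((⟪S x, x⟫_ℂ).re - r) / (R - r)) *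
        ((f R - f ((⟪S x, x⟫_ℂ).re)) / (R - (⟪S x, x⟫_ℂ).re) -
          (f ((⟪S x, x⟫_ℂ).re) - f r) / ((⟪S x, x⟫_ℂ).re - r)) :=
  cfc_jensen_defect_slope_bound_general S hS r R hspec f hfc hf x hx hm
end

section
/- Let S be a bounded selfadjoint operator on a complex Hilbert space K with Sp(S) ⊆ [r, R], r < R, and f : [r, R] → ℝ continuous convex. Then for every unit vector x ∈ K, ⟨f(S) x, x⟩ − f(⟨S x, x⟩) ≤ 2[ (f(r) + f(R))/2 − f((r+R)/2) ]. -/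
/-!
Let `L` be the chord of `f` over `[r, R]`. Convexity gives `f ≤ L` on `[r, R] ⊇ Sp(S)`, so
`f(S) ≤ L(S)` in the Loewner order, and since `L` is affine, `⟪L(S) x, x⟫ = L ⟪S x, x⟫` for a
unit vector `x`, where `⟪S x, x⟫ ∈ [r, R]`. It remains to bound the scalar defect `L - f`, which is
concave, nonnegative, and vanishes at `r` and `R`: the midpoint is a convex combination of `t` and
the endpoint farther from `t` with weight at least `1/2` on `t`, so `(L - f) t` is at most twice
the midpoint defect `(f r + f R) / 2 - f ((r + R) / 2)`.
-/

open scoped InnerProductSpace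
open Set

noncomputable def chord (f : ℝ → ℝ) (r R : ℝ) (t : ℝ) : ℝ := f r + slope f r R * (t - r)

lemma chord_eq_affine (f : ℝ → ℝ) (r R : ℝ) :
    chord f r R = fun t ↦ slope f r R * t + (f r - slope f r R * r) := by
  funext t; unfold chord; ring

@[simp] lemma chord_left (f : ℝ → ℝ) (r R : ℝ) : chord f r R r = f r := by simp [chord]

lemma chord_right (f : ℝ → ℝ) {r R : ℝ} (h : r ≠ R) : chord f r R R = f R := by
  rw [chord, slope_def_field, div_mul_cancel₀ _ (sub_ne_zero.2 h.symm)]; ring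

lemma chord_midpoint (f : ℝ → ℝ) {r R : ℝ} (h : r ≠ R) :
    chord f r R ((r + R) / 2) = (f r + f R) / 2 := by
  rw [chord, slope_def_field]; field_simp [sub_ne_zero.2 h.symm]; ring

lemma continuous_chord (f : ℝ → ℝ) (r R : ℝ) : Continuous (chord f r R) := by
  rw [chord_eq_affine]; fun_prop

lemma concaveOn_chord (f : ℝ → ℝ) (r R : ℝ) {s : Set ℝ} (hs : Convex ℝ s) :
    ConcaveOn ℝ s (chord f r R) := by
  rw [chord_eq_affine]
  exact ((LinearMap.lsmul ℝ ℝ (slope f r R)).concaveOn hs).add_const _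

lemma ConcaveOn.le_two_mul_apply_add_smul {E : Type*} [AddCommGroup E] [Module ℝ E]
    {s : Set E} {g : E → ℝ} (hg : ConcaveOn ℝ s g) {x y : E} (hx : x ∈ s) (hy : y ∈ s)
    (hgx : 0 ≤ g x) (hgy : 0 ≤ g y) {θ : ℝ} (hθ₁ : 1 / 2 ≤ θ) (hθ₂ : θ ≤ 1) :
    g x ≤ 2 * g (θ • x + (1 - θ) • y) := by
  have := hg.2 hx hy (show 0 ≤ θ by linarith) (show 0 ≤ 1 - θ by linarith) (by ring)
  simp only [smul_eq_mul] at this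
  nlinarith

namespace ConvexOn

variable {f : ℝ → ℝ} {r R t : ℝ}

lemma concaveOn_chord_sub (hf : ConvexOn ℝ (Icc r R) f) :
    ConcaveOn ℝ (Icc r R) (chord f r R - f) :=
  (concaveOn_chord f r R (convex_Icc r R)).sub hf

lemma le_chord (hf : ConvexOn ℝ (Icc r R) f) (hrR : r < R) (ht : t ∈ Icc r R) :
    f t ≤ chord f r R t := by
  have := hf.concaveOn_chord_sub.min_le_of_mem_Icc (left_mem_Icc.2 hrR.le)
    (right_mem_Icc.2 hrR.le) ht
  simp only [Pi.sub_apply, chord_left, sub_self, chord_right f hrR.ne, min_self,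
    sub_nonneg] at this
  exact this

lemma chord_sub_le_two_mul_midpoint_defect (hf : ConvexOn ℝ (Icc r R) f) (hrR : r < R)
    (ht : t ∈ Icc r R) :
    chord f r R t - f t ≤ 2 * ((f r + f R) / 2 - f ((r + R) / 2)) := by
  have hg := hf.concaveOn_chord_sub
  have hgt : 0 ≤ chord f r R t - f t := sub_nonneg.2 (hf.le_chord hrR ht)
  rw [← chord_midpoint f hrR.ne]
  show (chord f r R - f) t ≤ 2 * (chord f r R - f) ((r + R) / 2)
  obtain ⟨htr, htR⟩ := ht
  rcases le_total t ((r + R) / 2) with hmid | hmid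
  · have hRt : 0 < R - t := by linarith
    set θ := (R - r) / (2 * (R - t))
    have hcomb : θ • t + (1 - θ) • R = (r + R) / 2 := by
      simp only [θ, smul_eq_mul]; field_simp; ring
    exact hcomb ▸ hg.le_two_mul_apply_add_smul ⟨htr, htR⟩ (right_mem_Icc.2 hrR.le) hgt
      (by simp [chord_right f hrR.ne]) (θ := θ)
      (by rw [le_div_iff₀ (by positivity)]; linarith)
      (by rw [div_le_one (by positivity)]; linarith)
  · have htr' : 0 < t - r := by linarith
    set θ := (R - r) / (2 * (t - r))
    have hcomb : θ • t + (1 - θ) • r = (r + R) / 2 := by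
      simp only [θ, smul_eq_mul]; field_simp; ring
    exact hcomb ▸ hg.le_two_mul_apply_add_smul ⟨htr, htR⟩ (left_mem_Icc.2 hrR.le) hgt
      (by simp) (θ := θ)
      (by rw [le_div_iff₀ (by positivity)]; linarith)
      (by rw [div_le_one (by positivity)]; linarith)

end ConvexOn

namespace ContinuousLinearMap

variable {𝕜 E : Type*} [RCLike 𝕜] [NormedAddCommGroup E] [InnerProductSpace 𝕜 E]

lemma reApplyInnerSelf_mono {A B : E →L[𝕜] E} (h : A ≤ B) (x : E) :
    A.reApplyInnerSelf x ≤ B.reApplyInnerSelf x := by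
  have := (le_def A B |>.1 h).2 x
  simp only [reApplyInnerSelf_apply, sub_apply, inner_sub_left, map_sub] at this ⊢
  linarith

lemma reApplyInnerSelf_add (A B : E →L[𝕜] E) (x : E) :
    (A + B).reApplyInnerSelf x = A.reApplyInnerSelf x + B.reApplyInnerSelf x := by
  simp only [reApplyInnerSelf_apply, add_apply, inner_add_left, map_add]

variable [NormedSpace ℝ E] [IsScalarTower ℝ 𝕜 E]

lemma reApplyInnerSelf_real_smul (c : ℝ) (A : E →L[𝕜] E) (x : E) :
    (c • A).reApplyInnerSelf x = c * A.reApplyInnerSelf x := by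
  rw [reApplyInnerSelf_apply, smul_apply, RCLike.real_smul_eq_coe_smul (K := 𝕜),
    inner_smul_left, RCLike.conj_ofReal, RCLike.re_ofReal_mul, reApplyInnerSelf_apply]

lemma reApplyInnerSelf_algebraMap (c : ℝ) (x : E) :
    (algebraMap ℝ (E →L[𝕜] E) c).reApplyInnerSelf x = c * ‖x‖ ^ 2 := by
  rw [Algebra.algebraMap_eq_smul_one, reApplyInnerSelf_real_smul, reApplyInnerSelf_apply,
    one_apply_eq_self, inner_self_eq_norm_sq]

end ContinuousLinearMap

namespace IsSelfAdjoint

open ContinuousLinearMap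

variable {K : Type*} [NormedAddCommGroup K] [InnerProductSpace ℂ K] [CompleteSpace K]
  {S : K →L[ℂ] K}

lemma reApplyInnerSelf_cfc_affine (hS : IsSelfAdjoint S) (a b : ℝ) (x : K) :
    (cfc (fun t : ℝ ↦ a * t + b) S).reApplyInnerSelf x =
      a * S.reApplyInnerSelf x + b * ‖x‖ ^ 2 := by
  rw [cfc_add S _ _ (by fun_prop) (by fun_prop), cfc_const_mul a _ S, cfc_id' ℝ S,
    cfc_const b S, reApplyInnerSelf_add, reApplyInnerSelf_real_smul, reApplyInnerSelf_algebraMap]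

lemma reApplyInnerSelf_mem_Icc {r R : ℝ} (hS : IsSelfAdjoint S)
    (hspec : spectrum ℝ S ⊆ Icc r R) {x : K} (hx : ‖x‖ = 1) :
    S.reApplyInnerSelf x ∈ Icc r R := by
  have hr := reApplyInnerSelf_mono (algebraMap_le_of_le_spectrum (fun t ht ↦ (hspec ht).1) hS) x
  have hR := reApplyInnerSelf_mono (le_algebraMap_of_spectrum_le (fun t ht ↦ (hspec ht).2) hS) x
  simp only [reApplyInnerSelf_algebraMap, hx, one_pow, mul_one] at hr hR
  exact ⟨hr, hR⟩

end IsSelfAdjoint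

theorem cfc_jensen_defect_midpoint_bound
    {K : Type*} [NormedAddCommGroup K] [InnerProductSpace ℂ K] [CompleteSpace K]
    (S : K →L[ℂ] K) (hS : IsSelfAdjoint S) (r R : ℝ) (hrR : r < R)
    (hspec : spectrum ℝ S ⊆ Set.Icc r R)
    (f : ℝ → ℝ) (hfc : ContinuousOn f (Set.Icc r R))
    (hf : ConvexOn ℝ (Set.Icc r R) f)
    (x : K) (hx : ‖x‖ = 1) :
    (⟪(cfc f S) x, x⟫_ℂ).re - f ((⟪S x, x⟫_ℂ).re) ≤
      2 * ((f r + f R) / 2 - f ((r + R) / 2)) := by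
  set m := S.reApplyInnerSelf x
  have hm : m ∈ Icc r R := hS.reApplyInnerSelf_mem_Icc hspec hx
  have hle : cfc f S ≤ cfc (chord f r R) S :=
    cfc_mono (fun t ht ↦ hf.le_chord hrR (hspec ht)) (hfc.mono hspec)
      (continuous_chord f r R).continuousOn
  have hchord : (cfc (chord f r R) S).reApplyInnerSelf x = chord f r R m := by
    rw [chord_eq_affine, hS.reApplyInnerSelf_cfc_affine, hx]; ring
  calc (cfc f S).reApplyInnerSelf x - f m ≤ chord f r R m - f m := by
        linarith [hchord ▸ ContinuousLinearMap.reApplyInnerSelf_mono hle x]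
    _ ≤ 2 * ((f r + f R) / 2 - f ((r + R) / 2)) :=
        hf.chord_sub_le_two_mul_midpoint_defect hrR hm
end
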